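/- Let 0 < ε < δ < 1. If K ⊂ 𝔽_qⁿ is an ε-Kakeya set of rank r, then there exists a δ-Kakeya set A ⊂ 𝔽_qⁿ of rank r with cardinality |A| ≤ ⌈log(1−δ)/log(1−ε)⌉ · |K|. -/

import Mathlib

/-!
`GL(Fⁿ)` acts transitively on `Gr_{n,r}(F)`, so on average over `g` the translate `g • T` of a
set `T ⊆ Gr_{n,r}(F)` of density `ε` covers an `ε`-fraction of any `U ⊆ Gr_{n,r}(F)`. Choosing
`g₁, …, g_m` greedily, each covering an `ε`-fraction of the subspaces still missed, leaves at most
`(1 - ε)^m |Gr_{n,r}(F)|` of them uncovered. If `K` contains a translate of `S`, then `g(K)`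
contains one of `g • S`; hence `A = ⋃ gᵢ(K)` is a `(1 - (1 - ε)^m)`-Kakeya set with `|A| ≤ m |K|`,
and `m = ⌈log(1 - δ) / log(1 - ε)⌉` makes `(1 - ε)^m ≤ 1 - δ`.
-/

open Set

noncomputable section

/-- The Grassmannian `Gr_{n,r}(F)` of `r`-dimensional linear subspaces of `Fⁿ`. -/
def grassmannian (F : Type*) [Field F] (n r : ℕ) : Set (Submodule F (Fin n → F)) :=
  {S | Module.finrank F S = r}

/-- `K ⊆ Fⁿ` is an `ε`-Kakeya set of rank `r`: it contains a translate of at least an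
`ε`-proportion of the `r`-dimensional subspaces of `Fⁿ`. -/
def IsKakeyaWith (F : Type*) [Field F] (n r : ℕ) (ε : ℝ) (K : Set (Fin n → F)) : Prop :=
  ε * (Nat.card (grassmannian F n r) : ℝ) ≤
    (Nat.card {S : Submodule F (Fin n → F) |
      Module.finrank F S = r ∧ ∃ x : Fin n → F, ∀ y ∈ S, x + y ∈ K} : ℝ)

open Finset MulAction
open scoped Pointwise

section OrbitCounting

variable {G α : Type*} [Group G] [MulAction G α] [DecidableEq α]

theorem card_smul_finset_inter (g : G) (T U : Finset α) :
    #(g • T ∩ U) = #{t ∈ T | g • t ∈ U} := by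
  rw [← card_smul_finset g⁻¹, smul_finset_inter, inv_smul_smul]
  congr 1
  ext t
  simp [mem_inv_smul_finset_iff]

variable [Fintype G]

theorem card_filter_smul_eq_smul (t : α) (h : G) :
    #{g : G | g • t = h • t} = #{g : G | g • t = t} :=
  (card_equiv (Equiv.mulLeft h) fun g => by simp [mul_smul]).symm

theorem card_mul_card_filter_smul_mem {X U : Finset α} {t : α} (ht : orbit G t = X)
    (hU : U ⊆ X) : #X * #{g : G | g • t ∈ U} = #U * Fintype.card G := by
  have hfiber : ∀ u ∈ X, #{g : G | g • t = u} = #{g : G | g • t = t} := by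
    intro u hu
    obtain ⟨h, rfl⟩ : u ∈ orbit G t := ht ▸ hu
    exact card_filter_smul_eq_smul t h
  have hcount : ∀ V ⊆ X, #{g : G | g • t ∈ V} = #V * #{g : G | g • t = t} := by
    intro V hV
    rw [← sum_card_fiberwise_eq_card_filter, sum_congr rfl fun u hu => hfiber u (hV hu),
      sum_const, smul_eq_mul]
  have hall : #{g : G | g • t ∈ X} = Fintype.card G := by
    rw [filter_true_of_mem fun g _ => by rw [← mem_coe, ← ht]; exact mem_orbit t g, card_univ]
  rw [← hall, hcount U hU, hcount X subset_rfl]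
  ring

theorem exists_card_mul_card_le_card_mul_card_smul_finset_inter {X T U : Finset α}
    (hX : ∀ x ∈ X, orbit G x = X) (hT : T ⊆ X) (hU : U ⊆ X) :
    ∃ g : G, #T * #U ≤ #X * #(g • T ∩ U) := by
  have hsum : ∑ g : G, #X * #(g • T ∩ U) = ∑ _g : G, #T * #U :=
    calc ∑ g : G, #X * #(g • T ∩ U) = ∑ t ∈ T, #X * #{g : G | g • t ∈ U} := by
          simp only [card_smul_finset_inter, card_filter, mul_sum]
          exact sum_comm
      _ = ∑ _t ∈ T, #U * Fintype.card G :=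
          sum_congr rfl fun t ht => card_mul_card_filter_smul_mem (hX t (hT ht)) hU
      _ = ∑ _g : G, #T * #U := by simp only [sum_const, card_univ, smul_eq_mul]; ring
  obtain ⟨g, -, hg⟩ := exists_le_of_sum_le univ_nonempty hsum.ge
  exact ⟨g, hg⟩

theorem exists_card_sdiff_smul_finset_le {X T U : Finset α} (hX : ∀ x ∈ X, orbit G x = X)
    (hT : T ⊆ X) (hU : U ⊆ X) {ε : ℝ} (hε : ε * #X ≤ #T) :
    ∃ g : G, (#(U \ g • T) : ℝ) ≤ (1 - ε) * #U := by
  obtain ⟨g, hg⟩ := exists_card_mul_card_le_card_mul_card_smul_finset_inter hX hT hU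
  refine ⟨g, ?_⟩
  rcases X.eq_empty_or_nonempty with rfl | hXne
  · simp [subset_empty.mp hU]
  have hsplit : (#(U \ g • T) : ℝ) + #(g • T ∩ U) = #U := by
    rw [Finset.inter_comm]; exact_mod_cast card_sdiff_add_card_inter U (g • T)
  have hX0 : (0 : ℝ) < #X := by exact_mod_cast hXne.card_pos
  have hg' : (#T : ℝ) * #U ≤ #X * #(g • T ∩ U) := by exact_mod_cast hg
  refine le_of_mul_le_mul_left ?_ hX0
  nlinarith [mul_le_mul_of_nonneg_right hε (Nat.cast_nonneg (α := ℝ) #U)]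

theorem exists_card_sdiff_biUnion_smul_finset_le {X T : Finset α} (hX : ∀ x ∈ X, orbit G x = X)
    (hT : T ⊆ X) {ε : ℝ} (hε : ε * #X ≤ #T) (m : ℕ) :
    ∃ s : Finset G, #s ≤ m ∧ (#(X \ s.biUnion (· • T)) : ℝ) ≤ (1 - ε) ^ m * #X := by
  classical
  rcases X.eq_empty_or_nonempty with rfl | hXne
  · exact ⟨∅, by simp⟩
  have hε1 : ε ≤ 1 := by
    have hX0 : (0 : ℝ) < #X := by exact_mod_cast hXne.card_pos
    have : (#T : ℝ) ≤ #X := by exact_mod_cast Finset.card_le_card hT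
    nlinarith
  induction m with
  | zero => exact ⟨∅, by simp⟩
  | succ m ih =>
    obtain ⟨s, hs, hcov⟩ := ih
    obtain ⟨g, hg⟩ := exists_card_sdiff_smul_finset_le hX hT sdiff_subset hε
      (U := X \ s.biUnion (· • T))
    refine ⟨insert g s, (card_insert_le g s).trans (by omega), ?_⟩
    rw [Finset.biUnion_insert, Finset.union_comm, Finset.sdiff_union_distrib,
      ← Finset.sdiff_sdiff_left']
    calc _ ≤ (1 - ε) * #(X \ s.biUnion (· • T)) := hg
      _ ≤ (1 - ε) * ((1 - ε) ^ m * #X) := mul_le_mul_of_nonneg_left hcov (by linarith)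
      _ = (1 - ε) ^ (m + 1) * #X := by ring

end OrbitCounting

instance {R M : Type*} [Semiring R] [AddCommMonoid M] [Module R M] [Finite M] :
    Finite (Submodule R M) :=
  Finite.of_injective _ SetLike.coe_injective

instance {R M : Type*} [Semiring R] [AddCommMonoid M] [Module R M] [Finite M] :
    Finite (M ≃ₗ[R] M) :=
  Finite.of_injective _ DFunLike.coe_injective

section LinearEquivAction

variable {K V : Type*} [Field K] [AddCommGroup V] [Module K V]

theorem Submodule.exists_linearEquiv_map_eq [FiniteDimensional K V] {S S' : Submodule K V}
    (h : Module.finrank K S = Module.finrank K S') :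
    ∃ g : V ≃ₗ[K] V, S.map (g : V →ₗ[K] V) = S' := by
  obtain ⟨C, hC⟩ := S.exists_isCompl
  obtain ⟨C', hC'⟩ := S'.exists_isCompl
  have hCC' : Module.finrank K C = Module.finrank K C' := by
    have := Submodule.finrank_add_eq_of_isCompl hC
    have := Submodule.finrank_add_eq_of_isCompl hC'
    omega
  let g : V ≃ₗ[K] V := (Submodule.prodEquivOfIsCompl S C hC).symm ≪≫ₗ
    (LinearEquiv.ofFinrankEq _ _ h).prodCongr (LinearEquiv.ofFinrankEq _ _ hCC') ≪≫ₗ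
    Submodule.prodEquivOfIsCompl S' C' hC'
  have hle : S.map (g : V →ₗ[K] V) ≤ S' := by
    rintro _ ⟨x, hx, rfl⟩
    simp [g, Submodule.prodEquivOfIsCompl_symm_apply_left S C hC ⟨x, hx⟩]
  exact ⟨g, Submodule.eq_of_le_of_finrank_eq hle (by rw [LinearEquiv.finrank_map_eq, h])⟩

theorem Submodule.orbit_linearEquiv [FiniteDimensional K V] (S : Submodule K V) :
    orbit (V ≃ₗ[K] V) S = {S' : Submodule K V | Module.finrank K S' = Module.finrank K S} := by
  ext S'
  constructor
  · rintro ⟨g, rfl⟩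
    exact LinearEquiv.finrank_map_eq _ _
  · intro h
    exact S.exists_linearEquiv_map_eq h.symm

end LinearEquivAction

section Kakeya

variable {F : Type*} [Field F] {n r : ℕ}

def kakeyaDirections (r : ℕ) (K : Set (Fin n → F)) : Set (Submodule F (Fin n → F)) :=
  {S | Module.finrank F S = r ∧ ∃ x : Fin n → F, ∀ y ∈ S, x + y ∈ K}

theorem isKakeyaWith_iff_card_kakeyaDirections {ε : ℝ} {K : Set (Fin n → F)} :
    IsKakeyaWith F n r ε K ↔
      ε * Nat.card (grassmannian F n r) ≤ Nat.card (kakeyaDirections r K) :=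
  Iff.rfl

theorem IsKakeyaWith.mono {ε δ : ℝ} {K : Set (Fin n → F)} (hK : IsKakeyaWith F n r ε K)
    (h : δ ≤ ε) : IsKakeyaWith F n r δ K :=
  (mul_le_mul_of_nonneg_right h (Nat.cast_nonneg _)).trans hK

theorem orbit_eq_grassmannian {S : Submodule F (Fin n → F)} (hS : S ∈ grassmannian F n r) :
    orbit ((Fin n → F) ≃ₗ[F] (Fin n → F)) S = grassmannian F n r := by
  rw [Submodule.orbit_linearEquiv, hS]
  rfl

theorem kakeyaDirections_subset_grassmannian (K : Set (Fin n → F)) :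
    kakeyaDirections r K ⊆ grassmannian F n r :=
  fun _ hS => hS.1

theorem kakeyaDirections_mono {K L : Set (Fin n → F)} (h : K ⊆ L) :
    kakeyaDirections r K ⊆ kakeyaDirections r L :=
  fun _ ⟨hS, x, hx⟩ => ⟨hS, x, fun y hy => h (hx y hy)⟩

theorem smul_mem_kakeyaDirections_image (g : (Fin n → F) ≃ₗ[F] (Fin n → F))
    {K : Set (Fin n → F)} {S : Submodule F (Fin n → F)} (hS : S ∈ kakeyaDirections r K) :
    g • S ∈ kakeyaDirections r (g '' K) := by
  obtain ⟨hrank, x, hx⟩ := hS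
  refine ⟨(LinearEquiv.finrank_map_eq g S).trans hrank, g x, ?_⟩
  rintro _ ⟨y, hy, rfl⟩
  exact ⟨x + y, hx y hy, map_add g x y⟩

theorem IsKakeyaWith.exists_card_le_mul [Finite F] {ε : ℝ} {K : Set (Fin n → F)}
    (hK : IsKakeyaWith F n r ε K) (m : ℕ) :
    ∃ A : Set (Fin n → F), IsKakeyaWith F n r (1 - (1 - ε) ^ m) A ∧
      Nat.card A ≤ m * Nat.card K := by
  classical
  let _ : Fintype (Fin n → F) := Fintype.ofFinite _
  let _ : Fintype (Submodule F (Fin n → F)) := Fintype.ofFinite _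
  let _ : Fintype ((Fin n → F) ≃ₗ[F] (Fin n → F)) := Fintype.ofFinite _
  set X := (grassmannian F n r).toFinset
  set T := (kakeyaDirections r K).toFinset
  have hX : ∀ S ∈ X, orbit ((Fin n → F) ≃ₗ[F] (Fin n → F)) S = X := fun S hS => by
    rw [Set.coe_toFinset]
    exact orbit_eq_grassmannian (Set.mem_toFinset.mp hS)
  have hT : T ⊆ X := Set.toFinset_subset_toFinset.mpr (kakeyaDirections_subset_grassmannian K)
  have hε : ε * #X ≤ #T := by
    simpa only [isKakeyaWith_iff_card_kakeyaDirections, Nat.card_eq_card_toFinset] using hK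
  obtain ⟨s, hs, hcov⟩ := exists_card_sdiff_biUnion_smul_finset_le hX hT hε m
  set A := s.biUnion fun g => K.toFinset.image g
  refine ⟨A, ?_, ?_⟩
  · have hsub : s.biUnion (· • T) ⊆ (kakeyaDirections r (A : Set (Fin n → F))).toFinset := by
      intro S hS
      obtain ⟨g, hg, S₀, hS₀, rfl⟩ : ∃ g ∈ s, ∃ S₀ ∈ T, g • S₀ = S := by
        simpa only [Finset.mem_biUnion, Finset.mem_smul_finset] using hS
      rw [Set.mem_toFinset] at hS₀ ⊢
      refine kakeyaDirections_mono ?_ (smul_mem_kakeyaDirections_image g hS₀)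
      rintro _ ⟨x, hx, rfl⟩
      simpa [A] using ⟨g, hg, x, hx, rfl⟩
    have hsplit : (#(X \ s.biUnion (· • T)) : ℝ) + #(X ∩ s.biUnion (· • T)) = #X := by
      exact_mod_cast card_sdiff_add_card_inter _ _
    have hle : (#(X ∩ s.biUnion (· • T)) : ℝ) ≤
        #(kakeyaDirections r (A : Set (Fin n → F))).toFinset := by
      exact_mod_cast Finset.card_le_card (Finset.inter_subset_right.trans hsub)
    rw [isKakeyaWith_iff_card_kakeyaDirections, Nat.card_eq_card_toFinset,
      Nat.card_eq_card_toFinset]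
    linarith
  · rw [Nat.card_coe_set_eq, Set.ncard_coe_finset, Nat.card_eq_card_toFinset]
    calc #A ≤ #s * #K.toFinset := card_biUnion_le_card_mul _ _ _ fun g _ => card_image_le
      _ ≤ m * #K.toFinset := Nat.mul_le_mul_right _ hs

end Kakeya

theorem one_sub_pow_toNat_ceil_log_div_log_le {ε δ : ℝ} (hε : 0 < ε) (hε1 : ε < 1) (hδ : δ < 1) :
    (1 - ε) ^ ⌈Real.log (1 - δ) / Real.log (1 - ε)⌉.toNat ≤ 1 - δ := by
  have hlog : Real.log (1 - ε) < 0 := Real.log_neg (by linarith) (by linarith)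
  rw [← Real.log_le_log_iff (pow_pos (by linarith) _) (by linarith), Real.log_pow]
  calc (⌈Real.log (1 - δ) / Real.log (1 - ε)⌉.toNat : ℝ) * Real.log (1 - ε)
      ≤ Real.log (1 - δ) / Real.log (1 - ε) * Real.log (1 - ε) := by
        refine mul_le_mul_of_nonpos_right ((Int.le_ceil _).trans ?_) hlog.le
        exact_mod_cast Int.self_le_toNat _
    _ = Real.log (1 - δ) := div_mul_cancel₀ _ hlog.ne

theorem eps_kakeya_to_delta_kakeya_general (F : Type*) [Field F] [Fintype F]
    (n r : ℕ)
    (ε δ : ℝ) (hε : 0 < ε) (hεδ : ε < δ) (hδ : δ < 1)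
    (K : Set (Fin n → F)) (hK : IsKakeyaWith F n r ε K) :
    ∃ A : Set (Fin n → F), IsKakeyaWith F n r δ A ∧
      (Nat.card A : ℝ) ≤ (⌈Real.log (1 - δ) / Real.log (1 - ε)⌉ : ℝ) * Nat.card K := by
  have hε1 : ε < 1 := hεδ.trans hδ
  set m := ⌈Real.log (1 - δ) / Real.log (1 - ε)⌉
  have hm : (m.toNat : ℝ) = m := by
    have hratio : 0 ≤ Real.log (1 - δ) / Real.log (1 - ε) :=
      div_nonneg_of_nonpos (Real.log_nonpos (by linarith) (by linarith))
        (Real.log_nonpos (by linarith) (by linarith))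
    exact_mod_cast Int.toNat_of_nonneg (Int.ceil_nonneg hratio)
  obtain ⟨A, hA, hcard⟩ := hK.exists_card_le_mul m.toNat
  refine ⟨A, hA.mono ?_, ?_⟩
  · linarith [one_sub_pow_toNat_ceil_log_div_log_le hε hε1 hδ]
  · rw [← hm]
    exact_mod_cast hcard

/-- **Lemma.** Let `0 < ε < δ < 1`.  If `K ⊆ 𝔽_qⁿ` is an `ε`-Kakeya set of rank `r`,
then there exists a `δ`-Kakeya set `A ⊆ 𝔽_qⁿ` of rank `r` with cardinality
`|A| ≤ ⌈log(1-δ)/log(1-ε)⌉ · |K|`. -/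
theorem eps_kakeya_to_delta_kakeya (F : Type*) [Field F] [Fintype F]
    (n r : ℕ) (hr : 1 ≤ r) (hrn : r < n)
    (ε δ : ℝ) (hε : 0 < ε) (hεδ : ε < δ) (hδ : δ < 1)
    (K : Set (Fin n → F)) (hK : IsKakeyaWith F n r ε K) :
    ∃ A : Set (Fin n → F), IsKakeyaWith F n r δ A ∧
      (Nat.card A : ℝ) ≤ (⌈Real.log (1 - δ) / Real.log (1 - ε)⌉ : ℝ) * Nat.card K :=
  eps_kakeya_to_delta_kakeya_general F n r ε δ hε hεδ hδ K hK
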